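/- arXiv:2305.13946 — 8 statements merged into one kernel-verified Lean document; each statement's English description precedes it below -/
import Mathlib

section
/- Let λ* ∈ D satisfy Σ_{i=1}^d (1 − η p(i))/(λ* + η g(i)) = 1, and define x(i) = (1 − η p(i))/(λ* + η g(i)) and ĝ(i) = p(i)·(λ* + η g(i))/(1 − η p(i)). Then x(i)·ĝ(i) = p(i) for every i, and x minimizes the function y ↦ Σ_{i=1}^d (g(i) + ĝ(i))·y(i) − η^{−1} Σ_{i=1}^d log y(i) over all y in the open probability simplex (y(i) > 0 for all i, Σ_{i=1}^d y(i) = 1). -/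
/-!
The correction `ĝ` is chosen so that `g + ĝ = η⁻¹ / x - λ*/η`: the first-order optimality
condition of the barrier objective, with multiplier `λ*` for the constraint `∑ y = 1`.
On the simplex the objective is then `η⁻¹ ∑ (y i / x i - log (y i))` up to a constant, and
each summand is minimised at `y i = x i` by `log t ≤ t - 1`.
-/

open Finset Real

theorem one_sub_log_le_div_sub_log {a y : ℝ} (ha : 0 < a) (hy : 0 < y) :
    1 - log a ≤ y / a - log y := by
  have h := log_le_sub_one_of_pos (div_pos hy ha)
  rw [log_div hy.ne' ha.ne'] at h
  linarith

theorem sum_linear_sub_log_le {ι : Type*} [Fintype ι] {κ μ : ℝ} (hκ : 0 ≤ κ)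
    {c x y : ι → ℝ} (hc : ∀ i, c i = κ * (x i)⁻¹ + μ) (hx : ∀ i, 0 < x i)
    (hy : ∀ i, 0 < y i) (hxy : ∑ i, x i = ∑ i, y i) :
    ∑ i, c i * x i - κ * ∑ i, log (x i) ≤ ∑ i, c i * y i - κ * ∑ i, log (y i) := by
  have hsplit : ∀ z : ι → ℝ, ∑ i, c i * z i - κ * ∑ i, log (z i) =
      κ * ∑ i, (z i / x i - log (z i)) + μ * ∑ i, z i := by
    intro z
    rw [mul_sum, mul_sum, mul_sum, ← sum_sub_distrib, ← sum_add_distrib]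
    refine sum_congr rfl fun i _ => ?_
    rw [hc, div_eq_mul_inv]
    ring
  rw [hsplit x, hsplit y, hxy]
  gcongr κ * ?_ + _
  refine sum_le_sum fun i _ => ?_
  rw [div_self (hx i).ne']
  exact one_sub_log_le_div_sub_log (hx i) (hy i)

theorem stmt_4_general (d : ℕ) (η : ℝ) (hη : 0 < η) (g p : Fin d → ℝ)
    (hp : ∀ i, -1 ≤ η * p i ∧ η * p i ≤ 0)
    (ls : ℝ) (hls : ∀ i, 0 < ls + η * g i)
    (hsum : ∑ i, (1 - η * p i) / (ls + η * g i) = 1)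
    (x ghat : Fin d → ℝ)
    (hx : ∀ i, x i = (1 - η * p i) / (ls + η * g i))
    (hghat : ∀ i, ghat i = p i * (ls + η * g i) / (1 - η * p i)) :
    (∀ i, x i * ghat i = p i) ∧
    ∀ y : Fin d → ℝ, (∀ i, 0 < y i) → (∑ i, y i = 1) →
      ∑ i, (g i + ghat i) * x i - η⁻¹ * ∑ i, Real.log (x i) ≤
        ∑ i, (g i + ghat i) * y i - η⁻¹ * ∑ i, Real.log (y i) := by
  have hnum : ∀ i, 0 < 1 - η * p i := fun i => by linarith [(hp i).2]
  have hxpos : ∀ i, 0 < x i := fun i => by rw [hx i]; exact div_pos (hnum i) (hls i)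
  have hxsum : ∑ i, x i = 1 := by rw [← hsum]; exact sum_congr rfl fun i _ => hx i
  have hstat : ∀ i, g i + ghat i = η⁻¹ * (x i)⁻¹ + -(ls / η) := by
    intro i
    have hq := (hnum i).ne'
    have := hη.ne'
    rw [hx i, inv_div, hghat i]
    -- `field_simp` writes the denominator as `1 - p i * η`; `hq` must match that form.
    rw [mul_comm η (p i)] at hq ⊢
    field_simp
    ring
  refine ⟨fun i => ?_, fun y hy hysum => ?_⟩
  · have := (hnum i).ne'
    have := (hls i).ne'
    rw [hx i, hghat i]
    field_simp
  · exact sum_linear_sub_log_le (inv_nonneg.mpr hη.le) hstat hxpos hy (hxsum.trans hysum.symm)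

/-- If λ* ∈ D satisfies ∑ i, (1 - η p i)/(λ* + η g i) = 1, then with
x(i) = (1 - η p i)/(λ* + η g i) and ĝ(i) = p(i)·(λ* + η g i)/(1 - η p i) it holds that
x(i)·ĝ(i) = p(i) for all i, and x minimizes
y ↦ ∑ i, (g i + ĝ i) * y i - η⁻¹ * ∑ i, log (y i) over the open probability simplex. -/
theorem stmt_4 (d : ℕ) (hd : 0 < d) (η : ℝ) (hη : 0 < η) (g p : Fin d → ℝ)
    (hp : ∀ i, -1 ≤ η * p i ∧ η * p i ≤ 0)
    (ls : ℝ) (hls : ∀ i, 0 < ls + η * g i)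
    (hsum : ∑ i, (1 - η * p i) / (ls + η * g i) = 1)
    (x ghat : Fin d → ℝ)
    (hx : ∀ i, x i = (1 - η * p i) / (ls + η * g i))
    (hghat : ∀ i, ghat i = p i * (ls + η * g i) / (1 - η * p i)) :
    (∀ i, x i * ghat i = p i) ∧
    ∀ y : Fin d → ℝ, (∀ i, 0 < y i) → (∑ i, y i = 1) →
      ∑ i, (g i + ghat i) * x i - η⁻¹ * ∑ i, Real.log (x i) ≤
        ∑ i, (g i + ghat i) * y i - η⁻¹ * ∑ i, Real.log (y i) :=
  stmt_4_general d η hη g p hp ls hls hsum x ghat hx hghat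
end

section
/- With λ₀ = 1 − η g(i*), one has λ₀ ∈ D, ψ'(λ₀) ≤ η p(i*) ≤ 0, and consequently λ₀ ≤ λ*, where λ* is the unique zero of ψ' in D. -/
open Finset

/-- The derivative `ψ'` of the log-barrier `ψ(x) = x - ∑ i, a i * log (x + b i)`,
whose domain is `{x | ∀ i, 0 < x + b i}`. -/
noncomputable def barrierDeriv {ι : Type*} [Fintype ι] (a b : ι → ℝ) (x : ℝ) : ℝ :=
  1 - ∑ i, a i / (x + b i)

section

variable {ι : Type*} [Fintype ι] {a b : ι → ℝ}

theorem barrierDeriv_strictMonoOn [Nonempty ι] (ha : ∀ i, 0 < a i) :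
    StrictMonoOn (barrierDeriv a b) {x | ∀ i, 0 < x + b i} := by
  intro x hx y _ hxy
  have hsum : ∑ i, a i / (y + b i) < ∑ i, a i / (x + b i) :=
    sum_lt_sum_of_nonempty univ_nonempty fun i _ =>
      div_lt_div_of_pos_left (ha i) (hx i) (by linarith)
  unfold barrierDeriv
  linarith

/-- The term of index `j` alone already contributes `a j` to the sum. -/
theorem barrierDeriv_le_of_add_eq_one {x : ℝ} (ha : ∀ i, 0 ≤ a i) (hx : ∀ i, 0 < x + b i)
    (j : ι) (hj : x + b j = 1) : barrierDeriv a b x ≤ 1 - a j := by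
  have hterm : a j / (x + b j) ≤ ∑ i, a i / (x + b i) :=
    single_le_sum (fun i _ => div_nonneg (ha i) (hx i).le) (mem_univ j)
  rw [hj, div_one] at hterm
  unfold barrierDeriv
  linarith

end

theorem stmt_5_general (d : ℕ) (η : ℝ) (hη : 0 < η) (g p : Fin d → ℝ)
    (hp : ∀ i, -1 ≤ η * p i ∧ η * p i ≤ 0)
    (istar : Fin d) (histar : ∀ i, g istar ≤ g i)
    (lam0 : ℝ) (hlam0 : lam0 = 1 - η * g istar)
    (ls : ℝ) (hlsD : ∀ i, 0 < ls + η * g i)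
    (hls : 1 - ∑ i, (1 - η * p i) / (ls + η * g i) = 0) :
    (∀ i, 0 < lam0 + η * g i) ∧
    (1 - ∑ i, (1 - η * p i) / (lam0 + η * g i) ≤ η * p istar) ∧
    η * p istar ≤ 0 ∧
    lam0 ≤ ls := by
  have hnum : ∀ i, 0 < 1 - η * p i := fun i => by linarith [(hp i).2]
  have hD : ∀ i, 0 < lam0 + η * g i := fun i => by
    have := mul_le_mul_of_nonneg_left (histar i) hη.le
    rw [hlam0]
    linarith
  have hderiv : barrierDeriv (fun i => 1 - η * p i) (fun i => η * g i) lam0 ≤ η * p istar := by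
    have := barrierDeriv_le_of_add_eq_one (fun i => (hnum i).le) hD istar (by rw [hlam0]; ring)
    linarith
  have hzero : barrierDeriv (fun i => 1 - η * p i) (fun i => η * g i) ls = 0 := hls
  have : Nonempty (Fin d) := ⟨istar⟩
  refine ⟨hD, hderiv, (hp istar).2, ?_⟩
  refine ((barrierDeriv_strictMonoOn hnum).le_iff_le hD hlsD).mp ?_
  linarith [(hp istar).2]

/-- With λ₀ = 1 - η g(i*), one has λ₀ ∈ D, ψ'(λ₀) ≤ η p(i*) ≤ 0, and
consequently λ₀ ≤ λ*, where λ* is the unique zero of ψ' in D. -/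
theorem stmt_5 (d : ℕ) (hd : 0 < d) (η : ℝ) (hη : 0 < η) (g p : Fin d → ℝ)
    (hp : ∀ i, -1 ≤ η * p i ∧ η * p i ≤ 0)
    (istar : Fin d) (histar : ∀ i, g istar ≤ g i)
    (lam0 : ℝ) (hlam0 : lam0 = 1 - η * g istar)
    (ls : ℝ) (hlsD : ∀ i, 0 < ls + η * g i)
    (hls : 1 - ∑ i, (1 - η * p i) / (ls + η * g i) = 0) :
    (∀ i, 0 < lam0 + η * g i) ∧
    (1 - ∑ i, (1 - η * p i) / (lam0 + η * g i) ≤ η * p istar) ∧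
    η * p istar ≤ 0 ∧
    lam0 ≤ ls :=
  stmt_5_general d η hη g p hp istar histar lam0 hlam0 ls hlsD hls
end

section
/- The Newton iterates satisfy: for every t ≥ 0, λ_t ∈ D, ψ'(λ_t) ≤ 0, λ_t ≤ λ_{t+1}, and λ_t ≤ λ*, where λ* is the unique zero of ψ' in D. -/
/-!
With weights `w i > 0`, `ψ'(x) = 1 - ∑ w i / (x + a i)` is increasing and concave on the domain
`x + a i > 0`, so each tangent line lies above its graph. A Newton step taken from a point where
`ψ' ≤ 0` moves right, and lands where the tangent vanishes, hence where `ψ' ≤ 0` again: the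
iterates increase and never pass the zero of `ψ'`. The start `1 - a i*` already has `ψ' ≤ 0`,
since the `i*` summand alone is `w i* ≥ 1`.
-/

open Finset

variable {ι : Type*}

/-- `ψ` in the paper, with `w i = 1 - η p(i)` and `a i = η g(i)`, has domain `psiDomain a`,
derivative `psiDeriv w a` and second derivative `psiDeriv2 w a`. -/
def psiDomain (a : ι → ℝ) : Set ℝ := {x | ∀ i, 0 < x + a i}

lemma mem_psiDomain_of_le {a : ι → ℝ} {x y : ℝ} (hx : x ∈ psiDomain a) (hxy : x ≤ y) :
    y ∈ psiDomain a :=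
  fun i => (hx i).trans_le (by linarith)

lemma one_sub_mem_psiDomain {a : ι → ℝ} {j : ι} (hj : ∀ i, a j ≤ a i) :
    1 - a j ∈ psiDomain a :=
  fun i => by linarith [hj i]

lemma div_sub_div_le_mul_div_sq {w u v : ℝ} (hw : 0 ≤ w) (hu : 0 < u) (hv : 0 < v) :
    w / u - w / v ≤ (v - u) * (w / u ^ 2) := by
  have key : 0 ≤ w * (v - u) ^ 2 / (u ^ 2 * v) := by positivity
  have expand : (v - u) * (w / u ^ 2) - (w / u - w / v) = w * (v - u) ^ 2 / (u ^ 2 * v) := by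
    field_simp
  linarith

variable [Fintype ι]

noncomputable def psiDeriv (w a : ι → ℝ) (x : ℝ) : ℝ := 1 - ∑ i, w i / (x + a i)

noncomputable def psiDeriv2 (w a : ι → ℝ) (x : ℝ) : ℝ := ∑ i, w i / (x + a i) ^ 2

noncomputable def newtonStep (w a : ι → ℝ) (x : ℝ) : ℝ :=
  x - psiDeriv w a x / psiDeriv2 w a x

lemma psiDeriv_le_add_mul_psiDeriv2 {w a : ι → ℝ} (hw : ∀ i, 0 ≤ w i) {x y : ℝ}
    (hx : x ∈ psiDomain a) (hy : y ∈ psiDomain a) :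
    psiDeriv w a y ≤ psiDeriv w a x + (y - x) * psiDeriv2 w a x := by
  have := sum_le_sum fun i (_ : i ∈ univ) => div_sub_div_le_mul_div_sq (hw i) (hx i) (hy i)
  simp only [add_sub_add_right_eq_sub] at this
  simp only [psiDeriv, psiDeriv2, mul_sum, sum_sub_distrib] at this ⊢
  linarith

lemma psiDeriv_strictMonoOn [Nonempty ι] {w a : ι → ℝ} (hw : ∀ i, 0 < w i) :
    StrictMonoOn (psiDeriv w a) (psiDomain a) := by
  intro x hx y _ hxy
  have : ∑ i, w i / (y + a i) < ∑ i, w i / (x + a i) :=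
    sum_lt_sum_of_nonempty univ_nonempty fun i _ =>
      div_lt_div_of_pos_left (hw i) (hx i) (by linarith)
  simp only [psiDeriv]
  linarith

lemma psiDeriv2_pos [Nonempty ι] {w a : ι → ℝ} (hw : ∀ i, 0 < w i) {x : ℝ}
    (hx : x ∈ psiDomain a) : 0 < psiDeriv2 w a x :=
  sum_pos (fun i _ => div_pos (hw i) (pow_pos (hx i) 2)) univ_nonempty

lemma psiDeriv_one_sub_nonpos {w a : ι → ℝ} {j : ι} (hw : ∀ i, 0 ≤ w i) (hwj : 1 ≤ w j)
    (hj : ∀ i, a j ≤ a i) : psiDeriv w a (1 - a j) ≤ 0 := by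
  have := single_le_sum (fun i _ => div_nonneg (hw i) (one_sub_mem_psiDomain hj i).le)
    (mem_univ j)
  simp only [sub_add_cancel, div_one] at this
  simp only [psiDeriv]
  linarith

lemma le_newtonStep [Nonempty ι] {w a : ι → ℝ} (hw : ∀ i, 0 < w i) {x : ℝ}
    (hx : x ∈ psiDomain a) (hfx : psiDeriv w a x ≤ 0) : x ≤ newtonStep w a x := by
  have := div_nonpos_of_nonpos_of_nonneg hfx (psiDeriv2_pos hw hx).le
  unfold newtonStep
  linarith

lemma psiDeriv_newtonStep_nonpos [Nonempty ι] {w a : ι → ℝ} (hw : ∀ i, 0 < w i) {x : ℝ}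
    (hx : x ∈ psiDomain a) (hfx : psiDeriv w a x ≤ 0) :
    psiDeriv w a (newtonStep w a x) ≤ 0 := by
  have tangent := psiDeriv_le_add_mul_psiDeriv2 (fun i => (hw i).le) hx
    (mem_psiDomain_of_le hx (le_newtonStep hw hx hfx))
  have root : (newtonStep w a x - x) * psiDeriv2 w a x = -psiDeriv w a x := by
    have := (psiDeriv2_pos hw hx).ne'
    unfold newtonStep
    field_simp
    ring
  linarith

theorem stmt_6_general (d : ℕ) (η : ℝ) (hη : 0 < η) (g p : Fin d → ℝ)
    (hp : ∀ i, -1 ≤ η * p i ∧ η * p i ≤ 0)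
    (istar : Fin d) (histar : ∀ i, g istar ≤ g i)
    (lam : ℕ → ℝ) (hlam0 : lam 0 = 1 - η * g istar)
    (hrec : ∀ t : ℕ, lam (t + 1) = lam t -
      (1 - ∑ i, (1 - η * p i) / (lam t + η * g i)) /
        (∑ i, (1 - η * p i) / (lam t + η * g i) ^ 2))
    (ls : ℝ) (hlsD : ∀ i, 0 < ls + η * g i)
    (hls : 1 - ∑ i, (1 - η * p i) / (ls + η * g i) = 0) :
    ∀ t : ℕ, (∀ i, 0 < lam t + η * g i) ∧
      (1 - ∑ i, (1 - η * p i) / (lam t + η * g i) ≤ 0) ∧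
      lam t ≤ lam (t + 1) ∧
      lam t ≤ ls := by
  have : Nonempty (Fin d) := ⟨istar⟩
  set w : Fin d → ℝ := fun i => 1 - η * p i
  set a : Fin d → ℝ := fun i => η * g i
  have hw : ∀ i, 0 < w i := fun i => by linarith [(hp i).2]
  have ha : ∀ i, a istar ≤ a i := fun i => mul_le_mul_of_nonneg_left (histar i) hη.le
  have hstep : ∀ t, lam (t + 1) = newtonStep w a (lam t) := hrec
  have invariant : ∀ t, lam t ∈ psiDomain a ∧ psiDeriv w a (lam t) ≤ 0 := by
    intro t
    induction t with
    | zero =>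
      rw [hlam0]
      exact ⟨one_sub_mem_psiDomain ha, psiDeriv_one_sub_nonpos (fun i => (hw i).le)
        (by linarith [(hp istar).2]) ha⟩
    | succ t ih =>
      rw [hstep]
      exact ⟨mem_psiDomain_of_le ih.1 (le_newtonStep hw ih.1 ih.2),
        psiDeriv_newtonStep_nonpos hw ih.1 ih.2⟩
  intro t
  obtain ⟨hD, hf⟩ := invariant t
  refine ⟨hD, hf, (hstep t).symm ▸ le_newtonStep hw hD hf, ?_⟩
  exact ((psiDeriv_strictMonoOn hw).le_iff_le hD hlsD).mp (hf.trans_eq hls.symm)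

/-- The Newton iterates λ_{t+1} = λ_t - ψ'(λ_t)/ψ''(λ_t), started at
λ₀ = 1 - η g(i*), satisfy for every t ≥ 0: λ_t ∈ D, ψ'(λ_t) ≤ 0, λ_t ≤ λ_{t+1},
and λ_t ≤ λ*, where λ* is the unique zero of ψ' in D. -/
theorem stmt_6 (d : ℕ) (hd : 0 < d) (η : ℝ) (hη : 0 < η) (g p : Fin d → ℝ)
    (hp : ∀ i, -1 ≤ η * p i ∧ η * p i ≤ 0)
    (istar : Fin d) (histar : ∀ i, g istar ≤ g i)
    (lam : ℕ → ℝ) (hlam0 : lam 0 = 1 - η * g istar)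
    (hrec : ∀ t : ℕ, lam (t + 1) = lam t -
      (1 - ∑ i, (1 - η * p i) / (lam t + η * g i)) /
        (∑ i, (1 - η * p i) / (lam t + η * g i) ^ 2))
    (ls : ℝ) (hlsD : ∀ i, 0 < ls + η * g i)
    (hls : 1 - ∑ i, (1 - η * p i) / (ls + η * g i) = 0) :
    ∀ t : ℕ, (∀ i, 0 < lam t + η * g i) ∧
      (1 - ∑ i, (1 - η * p i) / (lam t + η * g i) ≤ 0) ∧
      lam t ≤ lam (t + 1) ∧
      lam t ≤ ls :=
  stmt_6_general d η hη g p hp istar histar lam hlam0 hrec ls hlsD hls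
end

section
/- Let λ ∈ D with ψ'(λ) < 0, and set λ⁺ = λ − ψ'(λ)/ψ''(λ). Then λ⁺ ∈ D, ψ'(λ⁺) ≤ 0, and |ψ'(λ⁺)·ψ''(λ⁺)| ≤ (1/4)·|ψ'(λ)·ψ''(λ)|. -/
/-!
Write `x i = l + c i`, `S = ψ''(l)` and let `t = -ψ'(l)/S > 0` be the Newton step. Expanding
`1/(x + t) = 1/x - t/x² + t²/(x²(x + t))` termwise, the first-order terms cancel at the Newton
point and `ψ'(l + t) = -t·u` with `u = t·∑ aᵢ/(xᵢ²(xᵢ + t)) ≥ 0`. Termwise one also has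
`t/(x²(x + t)) + 1/(x + t)² ≤ 1/x²`, i.e. `u + ψ''(l + t) ≤ S`. Hence
`|ψ'(l + t)·ψ''(l + t)| = t·u·ψ''(l + t) ≤ t·S²/4 = |ψ'(l)·ψ''(l)|/4` by AM-GM.
-/

open Finset

namespace LogBarrier

variable {ι : Type*} [Fintype ι]

/-- `deriv a c` and `deriv2 a c` are `ψ'` and `ψ''` for `ψ l = l - ∑ i, a i * log (l + c i)`. -/
noncomputable def deriv (a c : ι → ℝ) (l : ℝ) : ℝ := 1 - ∑ i, a i / (l + c i)

noncomputable def deriv2 (a c : ι → ℝ) (l : ℝ) : ℝ := ∑ i, a i / (l + c i) ^ 2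

lemma one_div_add_eq {x t : ℝ} (hx : x ≠ 0) (hxt : x + t ≠ 0) :
    1 / (x + t) = 1 / x - t / x ^ 2 + t ^ 2 / (x ^ 2 * (x + t)) := by
  field_simp
  ring

lemma div_sq_mul_add_add_one_div_sq_le {x t : ℝ} (hx : 0 < x) (ht : 0 ≤ t) :
    t / (x ^ 2 * (x + t)) + 1 / (x + t) ^ 2 ≤ 1 / x ^ 2 := by
  have hxt : 0 < x + t := by linarith
  rw [div_add_div _ _ (by positivity) (by positivity), div_le_div_iff₀ (by positivity)
    (by positivity)]
  nlinarith [mul_nonneg (mul_nonneg ht (pow_pos hx 3).le) hxt.le]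

lemma deriv2_pos {a c : ι → ℝ} {l : ℝ} (ha : ∀ i, 0 ≤ a i) (hx : ∀ i, 0 < l + c i)
    (hlt : deriv a c l < 1) : 0 < deriv2 a c l := by
  have hsum : 0 < ∑ i, a i / (l + c i) := by unfold deriv at hlt; linarith
  obtain ⟨i, -, hi⟩ := exists_lt_of_sum_lt (f := fun _ => (0 : ℝ)) (by simpa using hsum)
  refine sum_pos' (fun j _ => div_nonneg (ha j) (sq_nonneg _)) ⟨i, mem_univ i, ?_⟩
  exact div_pos ((div_pos_iff_of_pos_right (hx i)).1 hi) (pow_pos (hx i) 2)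

lemma deriv_add {a c : ι → ℝ} {l t : ℝ} (hx : ∀ i, l + c i ≠ 0)
    (hxt : ∀ i, l + c i + t ≠ 0) :
    deriv a c (l + t) = deriv a c l + t * deriv2 a c l
      - t ^ 2 * ∑ i, a i / ((l + c i) ^ 2 * (l + c i + t)) := by
  have hterm : ∀ i, a i / (l + t + c i) = a i / (l + c i) - t * (a i / (l + c i) ^ 2)
      + t ^ 2 * (a i / ((l + c i) ^ 2 * (l + c i + t))) := fun i => by
    rw [show l + t + c i = l + c i + t by ring, div_eq_mul_one_div, one_div_add_eq (hx i) (hxt i)]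
    ring
  simp only [deriv, deriv2, sum_congr rfl fun i _ => hterm i, sum_add_distrib, sum_sub_distrib,
    mul_sum]
  ring

lemma mul_sum_add_deriv2_add_le {a c : ι → ℝ} {l t : ℝ} (ha : ∀ i, 0 ≤ a i)
    (hx : ∀ i, 0 < l + c i) (ht : 0 ≤ t) :
    t * ∑ i, a i / ((l + c i) ^ 2 * (l + c i + t)) + deriv2 a c (l + t) ≤ deriv2 a c l := by
  rw [deriv2, deriv2, mul_sum, ← sum_add_distrib]
  refine sum_le_sum fun i _ => ?_
  have key := mul_le_mul_of_nonneg_left (div_sq_mul_add_add_one_div_sq_le (hx i) ht) (ha i)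
  rw [show l + t + c i = l + c i + t by ring]
  convert key using 1 <;> ring

theorem newton_step {a c : ι → ℝ} {l l' : ℝ} (ha : ∀ i, 0 ≤ a i) (hx : ∀ i, 0 < l + c i)
    (hneg : deriv a c l < 0) (hl' : l' = l - deriv a c l / deriv2 a c l) :
    (∀ i, 0 < l' + c i) ∧ deriv a c l' ≤ 0 ∧
      |deriv a c l' * deriv2 a c l'| ≤ 1 / 4 * |deriv a c l * deriv2 a c l| := by
  set S := deriv2 a c l
  have hS : 0 < S := deriv2_pos ha hx (by linarith)
  set t := -deriv a c l / S
  have ht : 0 < t := div_pos (by linarith) hS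
  have hderiv : deriv a c l = -(t * S) := by
    rw [div_mul_cancel₀ _ hS.ne', neg_neg]
  obtain rfl : l' = l + t := by rw [hl', sub_eq_add_neg, ← neg_div]
  have hxt : ∀ i, 0 < l + c i + t := fun i => by linarith [hx i]
  set u := t * ∑ i, a i / ((l + c i) ^ 2 * (l + c i + t))
  have hu : 0 ≤ u := mul_nonneg ht.le <| sum_nonneg fun i _ =>
    div_nonneg (ha i) (mul_pos (pow_pos (hx i) 2) (hxt i)).le
  have hB : 0 ≤ deriv2 a c (l + t) :=
    sum_nonneg fun i _ => div_nonneg (ha i) (sq_nonneg _)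
  have huB : u + deriv2 a c (l + t) ≤ S := mul_sum_add_deriv2_add_le ha hx ht.le
  have hderiv' : deriv a c (l + t) = -(t * u) := by
    rw [deriv_add (fun i => (hx i).ne') (fun i => (hxt i).ne'), hderiv]
    ring
  have hamgm : u * deriv2 a c (l + t) ≤ S ^ 2 / 4 := by
    nlinarith [four_mul_le_sq_add u (deriv2 a c (l + t))]
  refine ⟨fun i => by linarith [hx i], ?_, ?_⟩
  · rw [hderiv']
    exact neg_nonpos.2 (mul_nonneg ht.le hu)
  rw [hderiv', hderiv, neg_mul, neg_mul, abs_neg, abs_neg,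
    abs_of_nonneg (mul_nonneg (mul_nonneg ht.le hu) hB), abs_of_nonneg (by positivity)]
  calc t * u * deriv2 a c (l + t) = t * (u * deriv2 a c (l + t)) := by ring
    _ ≤ t * (S ^ 2 / 4) := by gcongr
    _ = 1 / 4 * (t * S * S) := by ring

end LogBarrier

theorem stmt_7_general (d : ℕ) (η : ℝ) (g p : Fin d → ℝ)
    (hp : ∀ i, -1 ≤ η * p i ∧ η * p i ≤ 0)
    (l : ℝ) (hl : ∀ i, 0 < l + η * g i)
    (hneg : 1 - ∑ i, (1 - η * p i) / (l + η * g i) < 0)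
    (lp : ℝ)
    (hlp : lp = l - (1 - ∑ i, (1 - η * p i) / (l + η * g i)) /
      (∑ i, (1 - η * p i) / (l + η * g i) ^ 2)) :
    (∀ i, 0 < lp + η * g i) ∧
    (1 - ∑ i, (1 - η * p i) / (lp + η * g i) ≤ 0) ∧
    |(1 - ∑ i, (1 - η * p i) / (lp + η * g i)) *
        (∑ i, (1 - η * p i) / (lp + η * g i) ^ 2)| ≤
      (1 / 4) * |(1 - ∑ i, (1 - η * p i) / (l + η * g i)) *
        (∑ i, (1 - η * p i) / (l + η * g i) ^ 2)| :=
  LogBarrier.newton_step (a := fun i => 1 - η * p i) (c := fun i => η * g i)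
    (fun i => by linarith [(hp i).2]) hl hneg hlp

/-- Let λ ∈ D with ψ'(λ) < 0, and set λ⁺ = λ - ψ'(λ)/ψ''(λ). Then λ⁺ ∈ D,
ψ'(λ⁺) ≤ 0, and |ψ'(λ⁺)·ψ''(λ⁺)| ≤ (1/4)·|ψ'(λ)·ψ''(λ)|. -/
theorem stmt_7 (d : ℕ) (hd : 0 < d) (η : ℝ) (hη : 0 < η) (g p : Fin d → ℝ)
    (hp : ∀ i, -1 ≤ η * p i ∧ η * p i ≤ 0)
    (l : ℝ) (hl : ∀ i, 0 < l + η * g i)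
    (hneg : 1 - ∑ i, (1 - η * p i) / (l + η * g i) < 0)
    (lp : ℝ)
    (hlp : lp = l - (1 - ∑ i, (1 - η * p i) / (l + η * g i)) /
      (∑ i, (1 - η * p i) / (l + η * g i) ^ 2)) :
    (∀ i, 0 < lp + η * g i) ∧
    (1 - ∑ i, (1 - η * p i) / (lp + η * g i) ≤ 0) ∧
    |(1 - ∑ i, (1 - η * p i) / (lp + η * g i)) *
        (∑ i, (1 - η * p i) / (lp + η * g i) ^ 2)| ≤
      (1 / 4) * |(1 - ∑ i, (1 - η * p i) / (l + η * g i)) *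
        (∑ i, (1 - η * p i) / (l + η * g i) ^ 2)| :=
  stmt_7_general d η g p hp l hl hneg lp hlp
end

section
/- For every t ≥ 0, the Newton iterates satisfy |ψ'(λ_t)·ψ''(λ_t)| ≤ 4^{−t}·|ψ'(λ₀)·ψ''(λ₀)|. -/
/-!
Write `u i = x + c i` and let `δ ≥ 0` be the Newton step from a point left of the minimizer of
the convex function `ψ`. Expanding `1 / (u + δ) = 1 / u - δ / u ^ 2 + δ ^ 2 / (u ^ 2 (u + δ))`
shows `ψ'(x + δ) = -δ ^ 2 R` for an explicit `R ≥ 0`, so the iterate stays left of the minimizer,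
while `|ψ'(x) ψ''(x)| = δ ψ''(x) ^ 2`. Splitting `ψ''(x) = δ R + B`, where `B` dominates
`ψ''(x + δ)`, the new product `δ ^ 2 R ψ''(x + δ) ≤ δ (δ R) B` is at most `δ ψ''(x) ^ 2 / 4`
by AM-GM. The starting point `λ₀` is left of the minimizer because the `i*`-th term of
`∑ i, a i / (λ₀ + c i)` is `a i* = 1 - η p i* ≥ 1`.
-/

open Finset

namespace LogBarrier

variable {ι : Type*} [Fintype ι] (a c : ι → ℝ)

/-- `barrierDeriv` and `barrierDeriv2` are the first two derivatives of
`ψ x = x - ∑ i, a i * log (x + c i)` on the domain `∀ i, 0 < x + c i`. -/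
noncomputable def barrierDeriv (x : ℝ) : ℝ := 1 - ∑ i, a i / (x + c i)

noncomputable def barrierDeriv2 (x : ℝ) : ℝ := ∑ i, a i / (x + c i) ^ 2

noncomputable def barrierRemainder (x δ : ℝ) : ℝ := ∑ i, a i / ((x + c i) ^ 2 * (x + δ + c i))

noncomputable def newtonStep (x : ℝ) : ℝ := x - barrierDeriv a c x / barrierDeriv2 a c x

def BelowMinimizer (x : ℝ) : Prop := (∀ i, 0 < x + c i) ∧ barrierDeriv a c x ≤ 0

variable {a c}

theorem barrierDeriv_add {x δ : ℝ} (hx : ∀ i, x + c i ≠ 0) (hxδ : ∀ i, x + δ + c i ≠ 0) :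
    barrierDeriv a c (x + δ) =
      barrierDeriv a c x + δ * barrierDeriv2 a c x - δ ^ 2 * barrierRemainder a c x δ := by
  have expand : ∀ i, a i / (x + δ + c i) = a i / (x + c i) - δ * (a i / (x + c i) ^ 2) +
      δ ^ 2 * (a i / ((x + c i) ^ 2 * (x + δ + c i))) := by
    intro i
    field_simp [hx i, hxδ i]
    ring
  simp only [barrierDeriv, barrierDeriv2, barrierRemainder, expand, sum_add_distrib,
    sum_sub_distrib, ← mul_sum]
  ring

theorem belowMinimizer_of_le {x : ℝ} (ha : ∀ i, 0 ≤ a i) (hx : ∀ i, 0 < x + c i) (j : ι)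
    (hj : x + c j ≤ a j) : BelowMinimizer a c x := by
  refine ⟨hx, sub_nonpos.2 ?_⟩
  calc (1 : ℝ) ≤ a j / (x + c j) := (one_le_div (hx j)).2 hj
    _ ≤ ∑ i, a i / (x + c i) :=
      single_le_sum (fun i _ => div_nonneg (ha i) (hx i).le) (mem_univ j)

theorem BelowMinimizer.barrierDeriv2_pos {x : ℝ} (hx : BelowMinimizer a c x)
    (ha : ∀ i, 0 ≤ a i) : 0 < barrierDeriv2 a c x := by
  obtain ⟨hu, hψ⟩ := hx
  obtain ⟨j, -, hj⟩ : ∃ j ∈ univ, (0 : ℝ) < a j / (x + c j) := by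
    refine exists_lt_of_sum_lt ?_
    simp only [sum_const_zero]
    linarith [sub_nonpos.1 hψ]
  calc 0 < a j / (x + c j) / (x + c j) := div_pos hj (hu j)
    _ = a j / (x + c j) ^ 2 := by rw [div_div, sq]
    _ ≤ barrierDeriv2 a c x :=
      single_le_sum (f := fun i => a i / (x + c i) ^ 2)
        (fun i _ => div_nonneg (ha i) (sq_nonneg _)) (mem_univ j)

theorem mul_barrierRemainder_mul_barrierDeriv2_le {x δ : ℝ} (ha : ∀ i, 0 ≤ a i)
    (hx : ∀ i, 0 < x + c i) (hδ : 0 ≤ δ) :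
    δ * barrierRemainder a c x δ * barrierDeriv2 a c (x + δ) ≤ barrierDeriv2 a c x ^ 2 / 4 := by
  have hxδ : ∀ i, 0 < x + δ + c i := fun i => by linarith [hx i]
  set A := δ * barrierRemainder a c x δ
  set B := ∑ i, a i / ((x + c i) * (x + δ + c i))
  have hA : 0 ≤ A := mul_nonneg hδ <| sum_nonneg fun i _ =>
    div_nonneg (ha i) (mul_nonneg (sq_nonneg _) (hxδ i).le)
  have hsplit : barrierDeriv2 a c x = A + B := by
    simp only [A, B, barrierDeriv2, barrierRemainder, mul_sum, ← sum_add_distrib]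
    refine sum_congr rfl fun i _ => ?_
    field_simp [(hx i).ne', (hxδ i).ne']
    ring
  have hB : barrierDeriv2 a c (x + δ) ≤ B := sum_le_sum fun i _ =>
    div_le_div_of_nonneg_left (ha i) (mul_pos (hx i) (hxδ i)) <| by
      rw [sq]; exact mul_le_mul_of_nonneg_right (by linarith) (hxδ i).le
  calc A * barrierDeriv2 a c (x + δ) ≤ A * B := mul_le_mul_of_nonneg_left hB hA
    _ ≤ (A + B) ^ 2 / 4 := by nlinarith [sq_nonneg (A - B)]
    _ = barrierDeriv2 a c x ^ 2 / 4 := by rw [hsplit]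

theorem BelowMinimizer.newtonStep {x : ℝ} (hx : BelowMinimizer a c x) (ha : ∀ i, 0 ≤ a i) :
    BelowMinimizer a c (newtonStep a c x) ∧
      |barrierDeriv a c (newtonStep a c x) * barrierDeriv2 a c (newtonStep a c x)| ≤
        1 / 4 * |barrierDeriv a c x * barrierDeriv2 a c x| := by
  have hV := hx.barrierDeriv2_pos ha
  obtain ⟨hu, hψ⟩ := hx
  set δ := -(barrierDeriv a c x / barrierDeriv2 a c x)
  have hδ : 0 ≤ δ := neg_nonneg.2 (div_nonpos_of_nonpos_of_nonneg hψ hV.le)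
  have hxδ : ∀ i, 0 < x + δ + c i := fun i => by linarith [hu i]
  have hnewton : barrierDeriv a c x = -(δ * barrierDeriv2 a c x) := by
    simp only [δ]; field_simp
  have hψδ : barrierDeriv a c (x + δ) = -(δ ^ 2 * barrierRemainder a c x δ) := by
    rw [barrierDeriv_add (fun i => (hu i).ne') (fun i => (hxδ i).ne'), hnewton]
    ring
  have hR : 0 ≤ barrierRemainder a c x δ := sum_nonneg fun i _ =>
    div_nonneg (ha i) (mul_nonneg (sq_nonneg _) (hxδ i).le)
  have hW : 0 ≤ barrierDeriv2 a c (x + δ) := sum_nonneg fun i _ =>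
    div_nonneg (ha i) (sq_nonneg _)
  have hcore := mul_barrierRemainder_mul_barrierDeriv2_le ha hu hδ
  have hstep : LogBarrier.newtonStep a c x = x + δ := by
    simp only [LogBarrier.newtonStep, δ]; ring
  rw [hstep]
  refine ⟨⟨hxδ, by rw [hψδ]; exact neg_nonpos.2 (by positivity)⟩, ?_⟩
  rw [hψδ, hnewton, abs_mul, abs_mul, abs_neg, abs_neg, abs_of_nonneg hW,
    abs_of_nonneg (by positivity), abs_of_nonneg (by positivity), abs_of_nonneg hV.le]
  calc δ ^ 2 * barrierRemainder a c x δ * barrierDeriv2 a c (x + δ)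
      = δ * (δ * barrierRemainder a c x δ * barrierDeriv2 a c (x + δ)) := by ring
    _ ≤ δ * (barrierDeriv2 a c x ^ 2 / 4) := mul_le_mul_of_nonneg_left hcore hδ
    _ = 1 / 4 * (δ * barrierDeriv2 a c x * barrierDeriv2 a c x) := by ring

theorem abs_barrierDeriv_mul_barrierDeriv2_iterate_le {lam : ℕ → ℝ} (ha : ∀ i, 0 ≤ a i)
    (h0 : BelowMinimizer a c (lam 0)) (hrec : ∀ t, lam (t + 1) = newtonStep a c (lam t))
    (t : ℕ) :
    |barrierDeriv a c (lam t) * barrierDeriv2 a c (lam t)| ≤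
      (1 / 4) ^ t * |barrierDeriv a c (lam 0) * barrierDeriv2 a c (lam 0)| := by
  have hmem : ∀ t, BelowMinimizer a c (lam t) := fun t => by
    induction t with
    | zero => exact h0
    | succ t ih => rw [hrec]; exact (ih.newtonStep ha).1
  induction t with
  | zero => simp
  | succ t ih =>
    rw [hrec, pow_succ']
    calc _ ≤ 1 / 4 * |barrierDeriv a c (lam t) * barrierDeriv2 a c (lam t)| :=
          ((hmem t).newtonStep ha).2
      _ ≤ _ := by rw [mul_assoc]; exact mul_le_mul_of_nonneg_left ih (by norm_num)

end LogBarrier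

open LogBarrier in
theorem stmt_8_general (d : ℕ) (η : ℝ) (hη : 0 < η) (g p : Fin d → ℝ)
    (hp : ∀ i, -1 ≤ η * p i ∧ η * p i ≤ 0)
    (istar : Fin d) (histar : ∀ i, g istar ≤ g i)
    (lam : ℕ → ℝ) (hlam0 : lam 0 = 1 - η * g istar)
    (hrec : ∀ t : ℕ, lam (t + 1) = lam t -
      (1 - ∑ i, (1 - η * p i) / (lam t + η * g i)) /
        (∑ i, (1 - η * p i) / (lam t + η * g i) ^ 2)) :
    ∀ t : ℕ,
      |(1 - ∑ i, (1 - η * p i) / (lam t + η * g i)) *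
          (∑ i, (1 - η * p i) / (lam t + η * g i) ^ 2)| ≤
        (1 / 4) ^ t * |(1 - ∑ i, (1 - η * p i) / (lam 0 + η * g i)) *
          (∑ i, (1 - η * p i) / (lam 0 + η * g i) ^ 2)| := by
  have ha : ∀ i, 0 ≤ 1 - η * p i := fun i => by linarith [(hp i).2]
  have h0 : BelowMinimizer (fun i => 1 - η * p i) (fun i => η * g i) (lam 0) :=
    belowMinimizer_of_le ha
      (fun i => by rw [hlam0]; nlinarith [histar i])
      istar (by rw [hlam0]; linarith [(hp istar).2])
  exact abs_barrierDeriv_mul_barrierDeriv2_iterate_le ha h0 hrec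

/-- For every t ≥ 0, the Newton iterates (started at λ₀ = 1 - η g(i*))
satisfy |ψ'(λ_t)·ψ''(λ_t)| ≤ 4^{-t}·|ψ'(λ₀)·ψ''(λ₀)|. -/
theorem stmt_8 (d : ℕ) (hd : 0 < d) (η : ℝ) (hη : 0 < η) (g p : Fin d → ℝ)
    (hp : ∀ i, -1 ≤ η * p i ∧ η * p i ≤ 0)
    (istar : Fin d) (histar : ∀ i, g istar ≤ g i)
    (lam : ℕ → ℝ) (hlam0 : lam 0 = 1 - η * g istar)
    (hrec : ∀ t : ℕ, lam (t + 1) = lam t -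
      (1 - ∑ i, (1 - η * p i) / (lam t + η * g i)) /
        (∑ i, (1 - η * p i) / (lam t + η * g i) ^ 2)) :
    ∀ t : ℕ,
      |(1 - ∑ i, (1 - η * p i) / (lam t + η * g i)) *
          (∑ i, (1 - η * p i) / (lam t + η * g i) ^ 2)| ≤
        (1 / 4) ^ t * |(1 - ∑ i, (1 - η * p i) / (lam 0 + η * g i)) *
          (∑ i, (1 - η * p i) / (lam 0 + η * g i) ^ 2)| :=
  stmt_8_general d η hη g p hp istar histar lam hlam0 hrec
end

section
/- With λ₀ = 1 − η g(i*), the initial point satisfies |ψ'(λ₀)| < 2d and ψ''(λ₀) ≤ 2d. -/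
/-! Every denominator is `λ₀ + η g(i) = 1 + η (g(i) - g(i*)) ≥ 1` and every numerator
`1 - η p(i)` lies in `[1, 2]`, so each summand of `ψ'(λ₀) - 1` and of `ψ''(λ₀)` lies in
`[0, 2]`; summing over the `d` indices gives both bounds. -/

lemma one_le_one_sub_mul_add_mul {η a b : ℝ} (hη : 0 ≤ η) (hab : a ≤ b) :
    1 ≤ 1 - η * a + η * b := by
  nlinarith

lemma Finset.sum_div_le_mul_card {ι : Type*} [Fintype ι] {a b : ι → ℝ} {c : ℝ}
    (ha₀ : ∀ i, 0 ≤ a i) (ha : ∀ i, a i ≤ c) (hb : ∀ i, 1 ≤ b i) :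
    ∑ i, a i / b i ≤ c * Fintype.card ι :=
  calc ∑ i, a i / b i ≤ ∑ _i : ι, c :=
        Finset.sum_le_sum fun i _ => (div_le_self (ha₀ i) (hb i)).trans (ha i)
    _ = c * Fintype.card ι := by
        rw [Finset.sum_const, Finset.card_univ, nsmul_eq_mul, mul_comm]

/-- With λ₀ = 1 - η g(i*), the initial point satisfies |ψ'(λ₀)| < 2d and
ψ''(λ₀) ≤ 2d. -/
theorem stmt_9 (d : ℕ) (hd : 0 < d) (η : ℝ) (hη : 0 < η) (g p : Fin d → ℝ)
    (hp : ∀ i, -1 ≤ η * p i ∧ η * p i ≤ 0)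
    (istar : Fin d) (histar : ∀ i, g istar ≤ g i)
    (lam0 : ℝ) (hlam0 : lam0 = 1 - η * g istar) :
    |1 - ∑ i, (1 - η * p i) / (lam0 + η * g i)| < 2 * (d : ℝ) ∧
    ∑ i, (1 - η * p i) / (lam0 + η * g i) ^ 2 ≤ 2 * (d : ℝ) := by
  have hden : ∀ i, 1 ≤ lam0 + η * g i := fun i =>
    hlam0 ▸ one_le_one_sub_mul_add_mul hη.le (histar i)
  have hnum₀ : ∀ i, 0 ≤ 1 - η * p i := fun i => by linarith [(hp i).2]
  have hnum₂ : ∀ i, 1 - η * p i ≤ 2 := fun i => by linarith [(hp i).1]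
  have hd₁ : (1 : ℝ) ≤ d := by exact_mod_cast hd
  have hS₀ : 0 ≤ ∑ i, (1 - η * p i) / (lam0 + η * g i) :=
    Finset.sum_nonneg fun i _ => div_nonneg (hnum₀ i) (zero_le_one.trans (hden i))
  have hS₂ := Finset.sum_div_le_mul_card hnum₀ hnum₂ hden
  rw [Fintype.card_fin] at hS₂
  refine ⟨abs_lt.2 ⟨by linarith, by linarith⟩, ?_⟩
  simpa only [Fintype.card_fin] using
    Finset.sum_div_le_mul_card hnum₀ hnum₂ fun i => one_le_pow₀ (hden i)
end

section
/- For every λ ∈ D with ψ'(λ) ≤ 0 (equivalently, Σ_{i=1}^d (1 − η p(i))/(λ + η g(i)) ≥ 1), one has ψ''(λ) ≥ 1/(2d). -/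
/-! With weights `aᵢ = 1 - η p(i) ∈ [0, 2]` and `xᵢ = λ + η g(i)`, weighted Cauchy–Schwarz gives
`1 ≤ (∑ aᵢ / xᵢ)² ≤ (∑ aᵢ) (∑ aᵢ / xᵢ²) ≤ 2d ψ''(λ)`. -/

open Finset

section WeightedCauchySchwarz

variable {ι K : Type*} [Field K] [LinearOrder K] [IsStrictOrderedRing K]

theorem sq_sum_div_le_sum_mul_sum_div_sq (s : Finset ι) {a : ι → K} (ha : ∀ i ∈ s, 0 ≤ a i)
    (x : ι → K) :
    (∑ i ∈ s, a i / x i) ^ 2 ≤ (∑ i ∈ s, a i) * ∑ i ∈ s, a i / x i ^ 2 :=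
  sum_sq_le_sum_mul_sum_of_sq_le_mul s ha (fun i hi => div_nonneg (ha i hi) (sq_nonneg _))
    fun i _ => (by ring : (a i / x i) ^ 2 = a i * (a i / x i ^ 2)).le

theorem one_div_mul_card_le_sum_div_sq [Fintype ι] {a x : ι → K} {M : K}
    (ha : ∀ i, 0 ≤ a i) (haM : ∀ i, a i ≤ M) (hsum : 1 ≤ ∑ i, a i / x i) :
    1 / (M * Fintype.card ι) ≤ ∑ i, a i / x i ^ 2 := by
  have hQ : 0 ≤ ∑ i, a i / x i ^ 2 := sum_nonneg fun i _ => div_nonneg (ha i) (sq_nonneg _)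
  have hA : ∑ i, a i ≤ M * Fintype.card ι := by
    simpa [mul_comm] using sum_le_sum fun i (_ : i ∈ univ) => haM i
  have key : 1 ≤ M * Fintype.card ι * ∑ i, a i / x i ^ 2 :=
    calc 1 ≤ (∑ i, a i / x i) ^ 2 := by nlinarith
      _ ≤ (∑ i, a i) * ∑ i, a i / x i ^ 2 :=
        sq_sum_div_le_sum_mul_sum_div_sq univ (fun i _ => ha i) x
      _ ≤ M * Fintype.card ι * ∑ i, a i / x i ^ 2 := mul_le_mul_of_nonneg_right hA hQ
  have hM : 0 < M * Fintype.card ι := by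
    by_contra! h
    nlinarith [mul_nonpos_of_nonpos_of_nonneg h hQ]
  rw [div_le_iff₀ hM]
  linarith

end WeightedCauchySchwarz

theorem stmt_10_general (d : ℕ) (η : ℝ) (g p : Fin d → ℝ)
    (hp : ∀ i, -1 ≤ η * p i ∧ η * p i ≤ 0)
    (l : ℝ)
    (hsign : 1 - ∑ i, (1 - η * p i) / (l + η * g i) ≤ 0) :
    1 / (2 * (d : ℝ)) ≤ ∑ i, (1 - η * p i) / (l + η * g i) ^ 2 := by
  simpa using one_div_mul_card_le_sum_div_sq (a := fun i => 1 - η * p i)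
    (x := fun i => l + η * g i) (M := 2)
    (fun i => by linarith [(hp i).2]) (fun i => by linarith [(hp i).1]) (by linarith)

/-- For every λ ∈ D with ψ'(λ) ≤ 0 (equivalently
∑ i, (1 - η p i)/(λ + η g i) ≥ 1), one has ψ''(λ) ≥ 1/(2d). -/
theorem stmt_10 (d : ℕ) (hd : 0 < d) (η : ℝ) (hη : 0 < η) (g p : Fin d → ℝ)
    (hp : ∀ i, -1 ≤ η * p i ∧ η * p i ≤ 0)
    (l : ℝ) (hl : ∀ i, 0 < l + η * g i)
    (hsign : 1 - ∑ i, (1 - η * p i) / (l + η * g i) ≤ 0) :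
    1 / (2 * (d : ℝ)) ≤ ∑ i, (1 - η * p i) / (l + η * g i) ^ 2 :=
  stmt_10_general d η g p hp l hsign
end

section
/- Let T ≥ 1 be an integer and let x be in the probability simplex in ℝ^d (x(i) ≥ 0 for all i, Σ_{i=1}^d x(i) = 1). Define x'(i) = (1 − 1/T)·x(i) + 1/(dT). Then x' lies in the probability simplex with x'(i) > 0 for all i, and the shifted log barrier satisfies h(x') = −d·log d − Σ_{i=1}^d log x'(i) ≤ d·log T. -/
/-!
Mixing with the uniform distribution keeps the total mass `1` and puts every coordinate above
`1 / (d T)`. Hence `∑ log x' i ≥ -d log (d T) = -d log d - d log T`, which is the barrier bound.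
-/

open Finset Real

theorem sum_one_sub_mul_add_div_card {ι : Type*} [Fintype ι] (hι : Fintype.card ι ≠ 0)
    (s : ℝ) {x : ι → ℝ} (hx : ∑ i, x i = 1) :
    ∑ i, ((1 - s) * x i + s / Fintype.card ι) = 1 := by
  rw [sum_add_distrib, ← mul_sum, hx, sum_const, card_univ, nsmul_eq_mul,
    mul_div_cancel₀ _ (Nat.cast_ne_zero.2 hι)]
  ring

theorem card_mul_log_le_sum_log {ι : Type*} [Fintype ι] {c : ℝ} (hc : 0 < c) {y : ι → ℝ}
    (hy : ∀ i, c ≤ y i) : Fintype.card ι * log c ≤ ∑ i, log (y i) := by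
  calc (Fintype.card ι : ℝ) * log c = ∑ _i : ι, log c := by
        rw [sum_const, card_univ, nsmul_eq_mul]
    _ ≤ ∑ i, log (y i) := sum_le_sum fun i _ => log_le_log hc (hy i)

/-- Let T ≥ 1 be an integer and x in the probability simplex in ℝ^d.
Define x'(i) = (1 - 1/T)·x(i) + 1/(dT). Then x' lies in the probability simplex with
x'(i) > 0 for all i, and the shifted log barrier satisfies
h(x') = -d log d - ∑ i, log (x' i) ≤ d log T. -/
theorem stmt_13 (d : ℕ) (hd : 0 < d) (T : ℕ) (hT : 1 ≤ T)
    (x : Fin d → ℝ) (hx0 : ∀ i, 0 ≤ x i) (hx1 : ∑ i, x i = 1)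
    (x' : Fin d → ℝ)
    (hx' : ∀ i, x' i = (1 - 1 / (T : ℝ)) * x i + 1 / ((d : ℝ) * T)) :
    (∀ i, 0 < x' i) ∧ (∑ i, x' i = 1) ∧
    -(d : ℝ) * Real.log d - ∑ i, Real.log (x' i) ≤ (d : ℝ) * Real.log T := by
  have hdR : (0 : ℝ) < d := Nat.cast_pos.2 hd
  have hTR : (1 : ℝ) ≤ T := Nat.one_le_cast.2 hT
  have hTR0 : (0 : ℝ) < T := one_pos.trans_le hTR
  have hlow : ∀ i, 1 / ((d : ℝ) * T) ≤ x' i := fun i => by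
    rw [hx' i]
    have : (0 : ℝ) ≤ 1 - 1 / T := sub_nonneg.2 (div_le_one_of_le₀ hTR hTR0.le)
    exact le_add_of_nonneg_left (mul_nonneg this (hx0 i))
  have hpos : (0 : ℝ) < 1 / (d * T) := by positivity
  refine ⟨fun i => hpos.trans_le (hlow i), ?_, ?_⟩
  · have hmix : ∀ i, x' i = (1 - 1 / (T : ℝ)) * x i + 1 / T / Fintype.card (Fin d) :=
      fun i => by rw [hx' i, Fintype.card_fin, div_div, mul_comm (T : ℝ)]
    simp only [hmix]
    exact sum_one_sub_mul_add_div_card (by simpa using hd.ne') _ hx1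
  · have hsum := card_mul_log_le_sum_log hpos hlow
    rw [Fintype.card_fin, one_div, log_inv, log_mul hdR.ne' hTR0.ne'] at hsum
    linarith
end
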